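/- Let $M, d$ be positive integers, $w \in \mathbb{R}^d$ with $w \ne 0$, and $o, q \in \{0,1,\dots,M\}^d$. With $P$ and $Q_w$ the preprocessing and query transformations, the cosine similarity satisfies $\frac{\langle P(o), Q_w(q)\rangle}{\|P(o)\|_2 \|Q_w(q)\|_2} = \frac{M\sum_{i=1}^d w_i - d_w^{l_1}(o,q)}{M\sqrt{d\sum_{i=1}^d w_i^2}}$. -/

import Mathlib

/-! Coordinatewise, `cos a cos b + sin a sin b = cos (a - b)`, and the angles `π/2 · u(o i)_j` and
`π/2 · u(q i)_j` differ (by `π/2`) in exactly `|o i - q i|` of the `M` positions, so coordinate `i`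
contributes `w i (M - |o i - q i|)` to the inner product. Since `cos² + sin² = 1`, the norms are
`√(d M)` and `√M ‖w‖₂` regardless of `o` and `q`. -/

open Real

/-- The unary encoding bit: `u x j = 1` if the (1-based) position `j+1 ≤ x`, else `0`. -/
noncomputable def unaryBit (M : ℕ) (x : ℕ) (j : Fin M) : ℝ :=
  if (j : ℕ) < x then 1 else 0

open Finset

section TrigSums

variable {κ ι : Type*} (s : Finset κ) (t : Finset ι)

lemma sum_sum_cos_sq_add_sum_sum_sin_sq (f : κ → ι → ℝ) :
    ∑ i ∈ s, ∑ j ∈ t, cos (f i j) ^ 2 + ∑ i ∈ s, ∑ j ∈ t, sin (f i j) ^ 2 = #s * #t := by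
  simp [← sum_add_distrib]

lemma sum_sum_mul_cos_sq_add_sum_sum_mul_sin_sq (f : κ → ι → ℝ) (c : κ → ℝ) :
    ∑ i ∈ s, ∑ j ∈ t, (c i * cos (f i j)) ^ 2 + ∑ i ∈ s, ∑ j ∈ t, (c i * sin (f i j)) ^ 2 =
      #t * ∑ i ∈ s, c i ^ 2 := by
  simp [← sum_add_distrib, mul_pow, ← mul_add, mul_sum]

lemma sum_sum_cos_mul_add_sum_sum_sin_mul (f g : κ → ι → ℝ) (c : κ → ℝ) :
    ∑ i ∈ s, ∑ j ∈ t, cos (f i j) * (c i * cos (g i j)) +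
        ∑ i ∈ s, ∑ j ∈ t, sin (f i j) * (c i * sin (g i j)) =
      ∑ i ∈ s, c i * ∑ j ∈ t, cos (f i j - g i j) := by
  simp only [← sum_add_distrib, mul_sum]
  exact sum_congr rfl fun i _ => sum_congr rfl fun j _ => by rw [cos_sub]; ring

end TrigSums

lemma unaryBit_mono (M : ℕ) {x y : ℕ} (hxy : x ≤ y) (j : Fin M) :
    unaryBit M x j ≤ unaryBit M y j := by
  unfold unaryBit
  split_ifs <;> norm_num; omega

lemma sum_unaryBit {M x : ℕ} (hx : x ≤ M) : ∑ j : Fin M, unaryBit M x j = x := by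
  simp [unaryBit, sum_boole, Fin.card_filter_val_lt, hx]

lemma sum_abs_sub_unaryBit {M x y : ℕ} (hx : x ≤ M) (hy : y ≤ M) :
    ∑ j : Fin M, |unaryBit M x j - unaryBit M y j| = |(x : ℝ) - y| := by
  wlog hxy : x ≤ y generalizing x y
  · simpa only [abs_sub_comm] using this hy hx (le_of_not_ge hxy)
  calc ∑ j : Fin M, |unaryBit M x j - unaryBit M y j|
      = ∑ j : Fin M, (unaryBit M y j - unaryBit M x j) :=
        sum_congr rfl fun j _ => by
          rw [abs_sub_comm, abs_of_nonneg (sub_nonneg.2 (unaryBit_mono M hxy j))]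
    _ = y - x := by rw [sum_sub_distrib, sum_unaryBit hx, sum_unaryBit hy]
    _ = |(x : ℝ) - y| := by
        rw [abs_sub_comm, abs_of_nonneg (sub_nonneg.2 (Nat.cast_le.2 hxy))]

lemma cos_sub_unaryBit (M x y : ℕ) (j : Fin M) :
    cos (π / 2 * unaryBit M x j - π / 2 * unaryBit M y j) =
      1 - |unaryBit M x j - unaryBit M y j| := by
  unfold unaryBit
  split_ifs <;> norm_num

lemma sum_cos_sub_unaryBit {M x y : ℕ} (hx : x ≤ M) (hy : y ≤ M) :
    ∑ j : Fin M, cos (π / 2 * unaryBit M x j - π / 2 * unaryBit M y j) = M - |(x : ℝ) - y| := by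
  simp only [cos_sub_unaryBit, sum_sub_distrib, sum_abs_sub_unaryBit hx hy, sum_const, card_univ,
    Fintype.card_fin, nsmul_eq_mul, mul_one]

theorem stmt_7_general (M d : ℕ) (w : Fin d → ℝ)
    (o q : Fin d → ℕ) (ho : ∀ i, o i ≤ M) (hq : ∀ i, q i ≤ M) :
    ((∑ i : Fin d, ∑ j : Fin M,
          Real.cos (π / 2 * unaryBit M (o i) j) * (w i * Real.cos (π / 2 * unaryBit M (q i) j))) +
        ∑ i : Fin d, ∑ j : Fin M,
          Real.sin (π / 2 * unaryBit M (o i) j) * (w i * Real.sin (π / 2 * unaryBit M (q i) j))) /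
      (Real.sqrt ((∑ i : Fin d, ∑ j : Fin M, Real.cos (π / 2 * unaryBit M (o i) j) ^ 2) +
          ∑ i : Fin d, ∑ j : Fin M, Real.sin (π / 2 * unaryBit M (o i) j) ^ 2) *
        Real.sqrt ((∑ i : Fin d, ∑ j : Fin M, (w i * Real.cos (π / 2 * unaryBit M (q i) j)) ^ 2) +
          ∑ i : Fin d, ∑ j : Fin M, (w i * Real.sin (π / 2 * unaryBit M (q i) j)) ^ 2)) =
      ((M : ℝ) * ∑ i, w i - ∑ i, w i * |(o i : ℝ) - (q i : ℝ)|) /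
        ((M : ℝ) * Real.sqrt ((d : ℝ) * ∑ i, w i ^ 2)) := by
  rw [sum_sum_cos_mul_add_sum_sum_sin_mul, sum_sum_cos_sq_add_sum_sum_sin_sq,
    sum_sum_mul_cos_sq_add_sum_sum_mul_sin_sq]
  simp only [sum_cos_sub_unaryBit (ho _) (hq _), card_univ, Fintype.card_fin]
  have hnorms : √(d * M) * √(M * ∑ i, w i ^ 2) = M * √(d * ∑ i, w i ^ 2) := by
    rw [← sqrt_mul (by positivity), show d * M * (M * ∑ i, w i ^ 2) = M ^ 2 * (d * ∑ i, w i ^ 2) by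
      ring, sqrt_mul (sq_nonneg _), sqrt_sq M.cast_nonneg]
  rw [hnorms, mul_sum (s := univ) (a := (M : ℝ)), ← sum_sub_distrib]
  simp only [mul_sub, mul_comm]

theorem stmt_7 (M d : ℕ) (hM : 0 < M) (hd : 0 < d) (w : Fin d → ℝ) (hw : w ≠ 0)
    (o q : Fin d → ℕ) (ho : ∀ i, o i ≤ M) (hq : ∀ i, q i ≤ M) :
    ((∑ i : Fin d, ∑ j : Fin M,
          Real.cos (π / 2 * unaryBit M (o i) j) * (w i * Real.cos (π / 2 * unaryBit M (q i) j))) +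
        ∑ i : Fin d, ∑ j : Fin M,
          Real.sin (π / 2 * unaryBit M (o i) j) * (w i * Real.sin (π / 2 * unaryBit M (q i) j))) /
      (Real.sqrt ((∑ i : Fin d, ∑ j : Fin M, Real.cos (π / 2 * unaryBit M (o i) j) ^ 2) +
          ∑ i : Fin d, ∑ j : Fin M, Real.sin (π / 2 * unaryBit M (o i) j) ^ 2) *
        Real.sqrt ((∑ i : Fin d, ∑ j : Fin M, (w i * Real.cos (π / 2 * unaryBit M (q i) j)) ^ 2) +
          ∑ i : Fin d, ∑ j : Fin M, (w i * Real.sin (π / 2 * unaryBit M (q i) j)) ^ 2)) =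
      ((M : ℝ) * ∑ i, w i - ∑ i, w i * |(o i : ℝ) - (q i : ℝ)|) /
        ((M : ℝ) * Real.sqrt ((d : ℝ) * ∑ i, w i ^ 2)) :=
  stmt_7_general M d w o q ho hq
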